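/- Let K be a simplicial complex with a partition P of its vertex set into p parts, and let U = {U_0,...,U_p} be the associated partition-based cover (U_i for i < p is the set of simplices with all vertices in P_i, and U_p is the closure of the simplices meeting at least two parts). Then for all distinct i, j < p, U_i ∩ U_j = ∅, and the intersection of any three distinct sets of U is empty. Consequently the nerve N(U) is a subcomplex of a star graph: its edges are exactly the pairs {i, p} with U_i ∩ U_p nonempty. -/

import Mathlib

open Finset

/-- `K` is an abstract simplicial complex. -/
def IsComplex {V : Type*} [DecidableEq V] (K : Finset (Finset V)) : Prop :=
  ∀ σ ∈ K, σ.Nonempty ∧ ∀ τ ⊆ σ, τ.Nonempty → τ ∈ K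

/-- The simplex `σ` meets at least two parts of the partition `P`. -/
def Crosses {V : Type*} [DecidableEq V] {p : ℕ}
    (P : Fin p → Finset V) (σ : Finset V) : Prop :=
  ∃ j k : Fin p, j ≠ k ∧ (σ ∩ P j).Nonempty ∧ (σ ∩ P k).Nonempty

instance {V : Type*} [DecidableEq V] {p : ℕ} (P : Fin p → Finset V) :
    DecidablePred (Crosses P) := fun σ => by
  unfold Crosses; infer_instance

/-- The partition-based cover of `K` determined by a vertex partition `P`. -/
def pcover {V : Type*} [DecidableEq V] {p : ℕ}
    (K : Finset (Finset V)) (P : Fin p → Finset V) : Fin (p + 1) → Finset (Finset V) :=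
  fun i =>
    if h : (i : ℕ) < p then K.filter (fun σ => σ ⊆ P ⟨i, h⟩)
    else (K.filter (fun σ => Crosses P σ)).biUnion
      (fun σ => σ.powerset.filter (fun τ => τ.Nonempty))

section PartitionCover

variable {V : Type*} [DecidableEq V] {p : ℕ} {K : Finset (Finset V)} {P : Fin p → Finset V}

theorem pcover_castSucc (K : Finset (Finset V)) (P : Fin p → Finset V) (i : Fin p) :
    pcover K P i.castSucc = K.filter (· ⊆ P i) := by
  simp [pcover]

theorem disjoint_pcover_castSucc (hK : IsComplex K)
    (hPdisj : ∀ i j : Fin p, i ≠ j → Disjoint (P i) (P j)) {i j : Fin p} (hij : i ≠ j) :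
    Disjoint (pcover K P i.castSucc) (pcover K P j.castSucc) := by
  rw [pcover_castSucc, pcover_castSucc, Finset.disjoint_left]
  intro σ hσi hσj
  rw [Finset.mem_filter] at hσi hσj
  obtain ⟨v, hv⟩ := (hK σ hσi.1).1
  exact Finset.disjoint_left.mp (hPdisj i j hij) (hσi.2 hv) (hσj.2 hv)

theorem pcover_inter_eq_empty_of_ne_last (hK : IsComplex K)
    (hPdisj : ∀ i j : Fin p, i ≠ j → Disjoint (P i) (P j)) {a b : Fin (p + 1)} (hab : a ≠ b)
    (ha : a ≠ Fin.last p) (hb : b ≠ Fin.last p) :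
    pcover K P a ∩ pcover K P b = ∅ := by
  obtain ⟨i, rfl⟩ := Fin.exists_castSucc_eq.mpr ha
  obtain ⟨j, rfl⟩ := Fin.exists_castSucc_eq.mpr hb
  exact Finset.disjoint_iff_inter_eq_empty.mp
    (disjoint_pcover_castSucc hK hPdisj (ne_of_apply_ne Fin.castSucc hab))

theorem pcover_inter_inter_eq_empty (hK : IsComplex K)
    (hPdisj : ∀ i j : Fin p, i ≠ j → Disjoint (P i) (P j)) {a b c : Fin (p + 1)}
    (hab : a ≠ b) (hbc : b ≠ c) (hac : a ≠ c) :
    pcover K P a ∩ pcover K P b ∩ pcover K P c = ∅ := by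
  have empty {x y : Fin (p + 1)} (hxy : x ≠ y) (hx : x ≠ Fin.last p) (hy : y ≠ Fin.last p) :
      pcover K P x ∩ pcover K P y = ∅ :=
    pcover_inter_eq_empty_of_ne_last hK hPdisj hxy hx hy
  refine Finset.subset_empty.mp ?_
  by_cases ha : a = Fin.last p
  · subst ha
    rw [← empty hbc hab.symm hac.symm, Finset.inter_assoc]
    exact Finset.inter_subset_right
  by_cases hb : b = Fin.last p
  · subst hb
    rw [← empty hac ha hbc.symm]
    exact Finset.inter_subset_inter Finset.inter_subset_left subset_rfl
  · rw [← empty hab ha hb]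
    exact Finset.inter_subset_left

theorem pcover_inter_nonempty_iff (hK : IsComplex K)
    (hPdisj : ∀ i j : Fin p, i ≠ j → Disjoint (P i) (P j)) {a b : Fin (p + 1)} (hab : a ≠ b) :
    (pcover K P a ∩ pcover K P b).Nonempty ↔
      ∃ i : Fin p, ({a, b} : Finset (Fin (p + 1))) = {i.castSucc, Fin.last p} ∧
        (pcover K P i.castSucc ∩ pcover K P (Fin.last p)).Nonempty := by
  constructor
  · intro hne
    have hlast : a = Fin.last p ∨ b = Fin.last p := by
      by_contra! h
      simp [pcover_inter_eq_empty_of_ne_last hK hPdisj hab h.1 h.2] at hne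
    rcases hlast with rfl | rfl
    · obtain ⟨i, rfl⟩ := Fin.exists_castSucc_eq.mpr hab.symm
      exact ⟨i, Finset.pair_comm _ _, by rwa [Finset.inter_comm]⟩
    · obtain ⟨i, rfl⟩ := Fin.exists_castSucc_eq.mpr hab
      exact ⟨i, rfl, hne⟩
  · rintro ⟨i, hpair, hne⟩
    rw [← Finset.coe_inj, Finset.coe_pair, Finset.coe_pair, Set.pair_eq_pair_iff] at hpair
    rcases hpair with ⟨rfl, rfl⟩ | ⟨rfl, rfl⟩
    · exact hne
    · rwa [Finset.inter_comm]

end PartitionCover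

theorem stmt_3_general {V : Type*} [DecidableEq V] {p : ℕ}
    (K : Finset (Finset V)) (P : Fin p → Finset V)
    (hK : IsComplex K)
    (hPdisj : ∀ i j : Fin p, i ≠ j → Disjoint (P i) (P j)) :
    -- the first `p` cover sets are pairwise disjoint
    (∀ i j : Fin (p + 1), i ≠ j → (i : ℕ) < p → (j : ℕ) < p →
      pcover K P i ∩ pcover K P j = ∅) ∧
    -- any triple intersection of distinct cover sets vanishes
    (∀ i j k : Fin (p + 1), i ≠ j → j ≠ k → i ≠ k →
      pcover K P i ∩ pcover K P j ∩ pcover K P k = ∅) ∧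
    -- the edges of the nerve are exactly the pairs `{i, p}` with nonempty overlap
    (∀ a b : Fin (p + 1), a ≠ b →
      ((pcover K P a ∩ pcover K P b).Nonempty ↔
        ∃ i : Fin p, ({a, b} : Finset (Fin (p + 1))) = {i.castSucc, Fin.last p} ∧
          (pcover K P i.castSucc ∩ pcover K P (Fin.last p)).Nonempty)) := by
  refine ⟨fun i j hij hi hj => ?_, fun _ _ _ => pcover_inter_inter_eq_empty hK hPdisj,
    fun _ _ => pcover_inter_nonempty_iff hK hPdisj⟩
  exact pcover_inter_eq_empty_of_ne_last hK hPdisj hij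
    (Fin.lt_last_iff_ne_last.mp hi) (Fin.lt_last_iff_ne_last.mp hj)

theorem stmt_3 {V : Type*} [DecidableEq V] {p : ℕ}
    (K : Finset (Finset V)) (P : Fin p → Finset V)
    (hK : IsComplex K)
    (hPdisj : ∀ i j : Fin p, i ≠ j → Disjoint (P i) (P j))
    (hPcover : ∀ v : V, (∃ i, v ∈ P i) ↔ ∃ σ ∈ K, v ∈ σ) :
    -- the first `p` cover sets are pairwise disjoint
    (∀ i j : Fin (p + 1), i ≠ j → (i : ℕ) < p → (j : ℕ) < p →
      pcover K P i ∩ pcover K P j = ∅) ∧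
    -- any triple intersection of distinct cover sets vanishes
    (∀ i j k : Fin (p + 1), i ≠ j → j ≠ k → i ≠ k →
      pcover K P i ∩ pcover K P j ∩ pcover K P k = ∅) ∧
    -- the edges of the nerve are exactly the pairs `{i, p}` with nonempty overlap
    (∀ a b : Fin (p + 1), a ≠ b →
      ((pcover K P a ∩ pcover K P b).Nonempty ↔
        ∃ i : Fin p, ({a, b} : Finset (Fin (p + 1))) = {i.castSucc, Fin.last p} ∧
          (pcover K P i.castSucc ∩ pcover K P (Fin.last p)).Nonempty)) :=
  stmt_3_general K P hK hPdisj
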